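/- Let Σ be an alphabet. Every language L ⊆ List Σ recognized by a reversible NFA over Σ belongs to RevL(ZMod 2, Σ), i.e., RevL(𝔹,Σ) ⊆ RevL(ZMod 2, Σ). -/

import Mathlib

open Matrix

namespace RevWA

/-- A weighted automaton over a semiring `S` and alphabet `α`, given by a linear
representation: number of states `n`, initial weight vector, transition matrices,
and final weight vector. -/
structure WA (S : Type) [Semiring S] (α : Type) where
  n : ℕ
  init : Fin n → S
  trans : α → Matrix (Fin n) (Fin n) S
  final : Fin n → S

variable {S : Type} [Semiring S] {α : Type}

/-- The matrix associated to a word: product of the transition matrices of its letters. -/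
def WA.matWord (A : WA S α) (w : List α) : Matrix (Fin A.n) (Fin A.n) S :=
  (w.map A.trans).prod

/-- The series realized by a weighted automaton: `i ⬝ μ(w) ⬝ f`. -/
def WA.series (A : WA S α) : List α → S :=
  fun w => A.init ⬝ᵥ (A.matWord w).mulVec A.final

/-- A matrix has at most one nonzero entry in each row. -/
def rowOk {n : ℕ} (M : Matrix (Fin n) (Fin n) S) : Prop :=
  ∀ i j j', M i j ≠ 0 → M i j' ≠ 0 → j = j'

/-- A matrix has at most one nonzero entry in each column. -/
def colOk {n : ℕ} (M : Matrix (Fin n) (Fin n) S) : Prop :=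
  ∀ i i' j, M i j ≠ 0 → M i' j ≠ 0 → i = i'

/-- A weighted automaton is reversible if each transition matrix has at most one
nonzero entry in each row and at most one nonzero entry in each column. -/
def WA.Reversible (A : WA S α) : Prop :=
  ∀ a : α, rowOk (A.trans a) ∧ colOk (A.trans a)

/-- A weighted automaton has exactly one initial state. -/
def WA.OneInitial (A : WA S α) : Prop :=
  ∃! q : Fin A.n, A.init q ≠ 0

/-- `Rev S α`: series realized by reversible weighted automata over `S` and `α`. -/
def Rev (S : Type) [Semiring S] (α : Type) : Set (List α → S) :=
  {r | ∃ A : WA S α, A.Reversible ∧ A.series = r}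

/-- `Rev₁ S α`: series realized by reversible weighted automata over `S` and `α`
with exactly one initial state. -/
def Rev1 (S : Type) [Semiring S] (α : Type) : Set (List α → S) :=
  {r | ∃ A : WA S α, A.Reversible ∧ A.OneInitial ∧ A.series = r}

/-- The support of a series. -/
def supp (r : List α → S) : Set (List α) :=
  {w | r w ≠ 0}

/-- `RevL S α`: supports of series realized by reversible weighted automata. -/
def RevL (S : Type) [Semiring S] (α : Type) : Set (Set (List α)) :=
  {L | ∃ r ∈ Rev S α, supp r = L}

/-- `RevL₁ S α`: supports of series realized by reversible weighted automata with
exactly one initial state. -/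
def RevL1 (S : Type) [Semiring S] (α : Type) : Set (Set (List α)) :=
  {L | ∃ r ∈ Rev1 S α, supp r = L}

/-- The characteristic series of a language `L` over `S`. -/
noncomputable def charSeries (S : Type) [Semiring S] {α : Type} (L : Set (List α)) :
    List α → S :=
  L.indicator 1

/-- A reversible nondeterministic finite automaton: deterministic and
codeterministic transition relation. -/
structure RevNFA (α : Type) where
  Q : Type
  fintypeQ : Fintype Q
  δ : Q → α → Q → Prop
  I : Set Q
  F : Set Q
  det : ∀ p a q q', δ p a q → δ p a q' → q = q'
  codet : ∀ p p' a q, δ p a q → δ p' a q → p = p'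

/-- Paths in a reversible NFA. -/
inductive RevNFA.Path {α : Type} (A : RevNFA α) : A.Q → List α → A.Q → Prop
  | nil (q : A.Q) : RevNFA.Path A q [] q
  | cons {p q r : A.Q} {a : α} {w : List α} :
      A.δ p a q → RevNFA.Path A q w r → RevNFA.Path A p (a :: w) r

/-- The language recognized by a reversible NFA. -/
def RevNFA.lang {α : Type} (A : RevNFA α) : Set (List α) :=
  {w | ∃ p ∈ A.I, ∃ q ∈ A.F, A.Path p w q}

/-- A reversible NFA has exactly one initial state. -/
def RevNFA.OneInitial {α : Type} (A : RevNFA α) : Prop :=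
  ∃ q : A.Q, A.I = {q}

/-- `RevL(𝔹,α)`: languages recognized by reversible NFAs. -/
def RevLB (α : Type) : Set (Set (List α)) :=
  {L | ∃ A : RevNFA α, A.lang = L}

/-- `RevL₁(𝔹,α)`: languages recognized by reversible NFAs with exactly one
initial state. -/
def RevL1B (α : Type) : Set (Set (List α)) :=
  {L | ∃ A : RevNFA α, A.OneInitial ∧ A.lang = L}

end RevWA


/-!
Reversible weighted automata over a commutative semiring are closed under sums (disjoint union of
the state sets, block-diagonal transition matrices) and products (Kronecker products of the
transition matrices), and they realize the constant series `0` and `1`; so their series form a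
subsemiring. A reversible NFA started in a single state `p` is deterministic, hence the
characteristic series `χ_p` of the language `L_p` it accepts from `p` is realized by a reversible
automaton over any semiring. Over `ZMod 2` the series `1 + ∏_{p ∈ I} (1 + χ_p)` takes the value `1`
exactly on `⋃_{p ∈ I} L_p`, which is the language of the NFA.
-/

open scoped Kronecker

theorem Fintype.sum_boole_eq_ite_exists {S ι : Type*} [AddCommMonoidWithOne S] [Fintype ι]
    {P : ι → Prop} [DecidablePred P] (hP : ∀ x y, P x → P y → x = y) :
    ∑ x, (if P x then (1 : S) else 0) = if ∃ x, P x then 1 else 0 := by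
  by_cases h : ∃ x, P x
  · obtain ⟨x, hx⟩ := h
    rw [Fintype.sum_eq_single x fun y hy => if_neg fun hPy => hy (hP _ _ hPy hx), if_pos hx,
      if_pos ⟨x, hx⟩]
  · push Not at h
    simp [h]

theorem ZMod.one_add_ne_zero_iff (x : ZMod 2) : 1 + x ≠ 0 ↔ x = 0 := by
  revert x; decide

theorem ZMod.one_add_eq_zero_iff (x : ZMod 2) : 1 + x = 0 ↔ x ≠ 0 := by
  revert x; decide

namespace RevWA

section Semiring

variable {S : Type} [Semiring S] {α : Type} {ι κ : Type*}

def IsPartialMonomial (M : Matrix ι ι S) : Prop :=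
  (∀ i j j', M i j ≠ 0 → M i j' ≠ 0 → j = j') ∧ ∀ i i' j, M i j ≠ 0 → M i' j ≠ 0 → i = i'

theorem WA.Reversible.isPartialMonomial {A : WA S α} (hA : A.Reversible) (a : α) :
    IsPartialMonomial (A.trans a) :=
  hA a

theorem isPartialMonomial_one [DecidableEq ι] [Subsingleton ι] :
    IsPartialMonomial (1 : Matrix ι ι S) :=
  ⟨fun _ _ _ _ _ => Subsingleton.elim _ _, fun _ _ _ _ _ => Subsingleton.elim _ _⟩

theorem IsPartialMonomial.fromBlocks {M : Matrix ι ι S} {N : Matrix κ κ S}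
    (hM : IsPartialMonomial M) (hN : IsPartialMonomial N) :
    IsPartialMonomial (Matrix.fromBlocks M 0 0 N) := by
  constructor
  · rintro (i | i) (j | j) (j' | j') h h' <;>
      simp only [fromBlocks_apply₁₁, fromBlocks_apply₁₂, fromBlocks_apply₂₁, fromBlocks_apply₂₂,
        Matrix.zero_apply, ne_eq, not_true_eq_false] at h h' <;>
      first | rw [hM.1 _ _ _ h h'] | rw [hN.1 _ _ _ h h']
  · rintro (i | i) (i' | i') (j | j) h h' <;>
      simp only [fromBlocks_apply₁₁, fromBlocks_apply₁₂, fromBlocks_apply₂₁, fromBlocks_apply₂₂,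
        Matrix.zero_apply, ne_eq, not_true_eq_false] at h h' <;>
      first | rw [hM.2 _ _ _ h h'] | rw [hN.2 _ _ _ h h']

variable [Fintype ι] [DecidableEq ι] [Fintype κ] [DecidableEq κ]

def repSeries (i : ι → S) (μ : α → Matrix ι ι S) (f : ι → S) : List α → S :=
  fun w => i ⬝ᵥ (w.map μ).prod *ᵥ f

theorem WA.series_eq_repSeries (A : WA S α) : A.series = repSeries A.init A.trans A.final :=
  rfl

theorem repSeries_mem_Rev {i f : ι → S} {μ : α → Matrix ι ι S}
    (hμ : ∀ a, IsPartialMonomial (μ a)) : repSeries i μ f ∈ Rev S α := by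
  let e : Fin (Fintype.card ι) ≃ ι := (Fintype.equivFin ι).symm
  refine ⟨⟨_, i ∘ e, fun a => (μ a).submatrix e e, f ∘ e⟩, fun a => ?_, ?_⟩
  · exact ⟨fun _ _ _ h h' => e.injective ((hμ a).1 _ _ _ h h'),
      fun _ _ _ h h' => e.injective ((hμ a).2 _ _ _ h h')⟩
  · funext w
    have hprod : (w.map fun a => (μ a).submatrix e e).prod = (w.map μ).prod.submatrix e e := by
      simpa [List.map_map, Function.comp_def] using
        (map_list_prod (reindexRingEquiv S e.symm) (w.map μ)).symm
    simp only [WA.series, WA.matWord, hprod, submatrix_mulVec_equiv, Function.comp_assoc,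
      Equiv.self_comp_symm, Function.comp_id]
    exact comp_equiv_dotProduct_comp_equiv _ _ e

theorem zero_mem_Rev : (0 : List α → S) ∈ Rev S α := by
  convert repSeries_mem_Rev (i := (0 : Unit → S)) (f := 0) (μ := fun _ : α => 1)
    fun _ => isPartialMonomial_one
  funext w
  simp [repSeries]

theorem one_mem_Rev : (1 : List α → S) ∈ Rev S α := by
  convert repSeries_mem_Rev (i := (1 : Unit → S)) (f := 1) (μ := fun _ : α => 1)
    fun _ => isPartialMonomial_one
  funext w
  simp [repSeries]

theorem list_prod_map_fromBlocks (μ : α → Matrix ι ι S) (ν : α → Matrix κ κ S) (w : List α) :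
    (w.map fun a => Matrix.fromBlocks (μ a) 0 0 (ν a)).prod =
      Matrix.fromBlocks (w.map μ).prod 0 0 (w.map ν).prod := by
  induction w with
  | nil => simp [fromBlocks_one]
  | cons a w ih => simp [ih, fromBlocks_multiply]

theorem repSeries_add (i₁ f₁ : ι → S) (μ₁ : α → Matrix ι ι S) (i₂ f₂ : κ → S)
    (μ₂ : α → Matrix κ κ S) :
    repSeries (Sum.elim i₁ i₂) (fun a => Matrix.fromBlocks (μ₁ a) 0 0 (μ₂ a)) (Sum.elim f₁ f₂) =
      repSeries i₁ μ₁ f₁ + repSeries i₂ μ₂ f₂ := by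
  funext w
  simp [repSeries, list_prod_map_fromBlocks, fromBlocks_mulVec]

theorem add_mem_Rev {r₁ r₂ : List α → S} (h₁ : r₁ ∈ Rev S α) (h₂ : r₂ ∈ Rev S α) :
    r₁ + r₂ ∈ Rev S α := by
  obtain ⟨A₁, hA₁, rfl⟩ := h₁
  obtain ⟨A₂, hA₂, rfl⟩ := h₂
  rw [WA.series_eq_repSeries, WA.series_eq_repSeries, ← repSeries_add]
  exact repSeries_mem_Rev fun a => (hA₁.isPartialMonomial a).fromBlocks (hA₂.isPartialMonomial a)

end Semiring

section CommSemiring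

variable {S : Type} [CommSemiring S] {α : Type} {ι κ : Type*}

theorem IsPartialMonomial.kronecker {M : Matrix ι ι S} {N : Matrix κ κ S}
    (hM : IsPartialMonomial M) (hN : IsPartialMonomial N) : IsPartialMonomial (M ⊗ₖ N) := by
  constructor
  · rintro ⟨i, k⟩ ⟨j, l⟩ ⟨j', l'⟩ h h'
    obtain ⟨hj, hl⟩ := ne_zero_and_ne_zero_of_mul h
    obtain ⟨hj', hl'⟩ := ne_zero_and_ne_zero_of_mul h'
    rw [hM.1 i j j' hj hj', hN.1 k l l' hl hl']
  · rintro ⟨i, k⟩ ⟨i', k'⟩ ⟨j, l⟩ h h'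
    obtain ⟨hi, hk⟩ := ne_zero_and_ne_zero_of_mul h
    obtain ⟨hi', hk'⟩ := ne_zero_and_ne_zero_of_mul h'
    rw [hM.2 i i' j hi hi', hN.2 k k' l hk hk']

variable [Fintype ι] [Fintype κ]

theorem dotProduct_kronecker_mulVec (u₁ f₁ : ι → S) (M : Matrix ι ι S) (u₂ f₂ : κ → S)
    (N : Matrix κ κ S) :
    (fun x : ι × κ => u₁ x.1 * u₂ x.2) ⬝ᵥ (M ⊗ₖ N) *ᵥ (fun x => f₁ x.1 * f₂ x.2) =
      (u₁ ⬝ᵥ M *ᵥ f₁) * (u₂ ⬝ᵥ N *ᵥ f₂) := by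
  simp only [dotProduct, mulVec, Fintype.sum_prod_type, kroneckerMap_apply, Finset.sum_mul_sum]
  refine Finset.sum_congr rfl fun i _ => Finset.sum_congr rfl fun k _ => ?_
  rw [mul_mul_mul_comm, Finset.sum_mul_sum]
  simp only [mul_mul_mul_comm]

variable [DecidableEq ι] [DecidableEq κ]

theorem list_prod_map_kronecker (μ : α → Matrix ι ι S) (ν : α → Matrix κ κ S) (w : List α) :
    (w.map fun a => μ a ⊗ₖ ν a).prod = (w.map μ).prod ⊗ₖ (w.map ν).prod := by
  induction w with
  | nil => simp
  | cons a w ih => simp [ih, mul_kronecker_mul]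

theorem repSeries_mul (i₁ f₁ : ι → S) (μ₁ : α → Matrix ι ι S) (i₂ f₂ : κ → S)
    (μ₂ : α → Matrix κ κ S) :
    repSeries (fun x : ι × κ => i₁ x.1 * i₂ x.2) (fun a => μ₁ a ⊗ₖ μ₂ a)
        (fun x => f₁ x.1 * f₂ x.2) =
      repSeries i₁ μ₁ f₁ * repSeries i₂ μ₂ f₂ := by
  funext w
  simp only [repSeries, list_prod_map_kronecker, dotProduct_kronecker_mulVec, Pi.mul_apply]

theorem mul_mem_Rev {r₁ r₂ : List α → S} (h₁ : r₁ ∈ Rev S α) (h₂ : r₂ ∈ Rev S α) :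
    r₁ * r₂ ∈ Rev S α := by
  obtain ⟨A₁, hA₁, rfl⟩ := h₁
  obtain ⟨A₂, hA₂, rfl⟩ := h₂
  rw [WA.series_eq_repSeries, WA.series_eq_repSeries, ← repSeries_mul]
  exact repSeries_mem_Rev fun a => (hA₁.isPartialMonomial a).kronecker (hA₂.isPartialMonomial a)

def revSubsemiring (S : Type) [CommSemiring S] (α : Type) : Subsemiring (List α → S) where
  carrier := Rev S α
  zero_mem' := zero_mem_Rev
  one_mem' := one_mem_Rev
  add_mem' := add_mem_Rev
  mul_mem' := mul_mem_Rev

end CommSemiring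

theorem supp_charSeries {S : Type} [Semiring S] [Nontrivial S] {α : Type} (L : Set (List α)) :
    supp (charSeries S L) = L := by
  ext w
  simp [supp, charSeries]

theorem supp_one_add_prod_one_add {α : Type} {ι : Type*} (s : Finset ι)
    (r : ι → List α → ZMod 2) : supp (1 + ∏ p ∈ s, (1 + r p)) = ⋃ p ∈ s, supp (r p) := by
  ext w
  simp only [supp, Set.mem_ofPred_eq, Set.mem_iUnion, Pi.add_apply, Pi.one_apply,
    Finset.prod_apply, exists_prop, ZMod.one_add_ne_zero_iff, Finset.prod_eq_zero_iff,
    ZMod.one_add_eq_zero_iff]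

namespace RevNFA

open Classical

attribute [local instance] RevNFA.fintypeQ

variable {S : Type} [Semiring S] {α : Type} (A : RevNFA α)

def langFrom (p : A.Q) : Set (List α) :=
  {w | ∃ q ∈ A.F, A.Path p w q}

theorem lang_eq_biUnion_langFrom : A.lang = ⋃ p ∈ A.I, A.langFrom p := by
  ext w
  simp [lang, langFrom]

variable {A}

theorem Path.unique {p q q' : A.Q} {w : List α} (h : A.Path p w q) (h' : A.Path p w q') :
    q = q' := by
  induction h generalizing q' with
  | nil => cases h'; rfl
  | cons hd _ ih =>
    cases h' with
    | cons hd' htl' => exact ih (A.det _ _ _ _ hd hd' ▸ htl')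

theorem path_nil_iff {p q : A.Q} : A.Path p [] q ↔ p = q :=
  ⟨fun h => by cases h; rfl, fun h => h ▸ Path.nil p⟩

theorem path_cons_iff {p r : A.Q} {a : α} {w : List α} :
    A.Path p (a :: w) r ↔ ∃ q, A.δ p a q ∧ A.Path q w r :=
  ⟨fun h => by cases h with | cons hd tl => exact ⟨_, hd, tl⟩,
    fun ⟨_, hd, tl⟩ => Path.cons hd tl⟩

variable (A)

noncomputable def transMatrix (a : α) : Matrix A.Q A.Q S :=
  fun p q => if A.δ p a q then 1 else 0

theorem isPartialMonomial_transMatrix (a : α) : IsPartialMonomial (A.transMatrix (S := S) a) :=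
  ⟨fun p q q' h h' => A.det p a q q' (ite_ne_right_iff.1 h).1 (ite_ne_right_iff.1 h').1,
    fun p p' q h h' => A.codet p p' a q (ite_ne_right_iff.1 h).1 (ite_ne_right_iff.1 h').1⟩

theorem list_prod_map_transMatrix_apply (w : List α) (p r : A.Q) :
    (w.map A.transMatrix).prod p r = if A.Path p w r then (1 : S) else 0 := by
  induction w generalizing p with
  | nil => simp [one_apply, path_nil_iff]
  | cons a w ih =>
    simp only [List.map_cons, List.prod_cons, mul_apply, ih, transMatrix, ite_zero_mul_ite_zero,
      mul_one, path_cons_iff]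
    exact Fintype.sum_boole_eq_ite_exists fun q q' h h' => A.det p a q q' h.1 h'.1

theorem charSeries_langFrom_mem_Rev (p : A.Q) : charSeries S (A.langFrom p) ∈ Rev S α := by
  convert repSeries_mem_Rev (i := (Pi.single p 1 : A.Q → S)) (f := A.F.indicator 1)
    A.isPartialMonomial_transMatrix using 1
  funext w
  rw [repSeries, single_dotProduct, one_mul]
  simp only [mulVec, dotProduct, list_prod_map_transMatrix_apply, Set.indicator_apply,
    Pi.one_apply, ite_zero_mul_ite_zero, mul_one, charSeries, langFrom, Set.mem_ofPred_eq]
  rw [Fintype.sum_boole_eq_ite_exists fun q q' h h' => h.1.unique h'.1]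
  simp [and_comm]

end RevNFA

end RevWA

open RevWA in
theorem stmt8_general (α : Type) :
    RevLB α ⊆ RevL (ZMod 2) α := by
  classical
  rintro L ⟨A, rfl⟩
  let _ := A.fintypeQ
  have hmem : 1 + ∏ p ∈ A.I.toFinset, (1 + charSeries (ZMod 2) (A.langFrom p)) ∈
      revSubsemiring (ZMod 2) α :=
    add_mem (one_mem _) (prod_mem fun p _ => add_mem (one_mem _) (A.charSeries_langFrom_mem_Rev p))
  refine ⟨_, hmem, ?_⟩
  simp [supp_one_add_prod_one_add, supp_charSeries, A.lang_eq_biUnion_langFrom]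

open RevWA in
theorem stmt8 (α : Type) [Fintype α] [Nonempty α] :
    RevLB α ⊆ RevL (ZMod 2) α :=
  stmt8_general α
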